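/- arXiv:2512.17690 — 2 statements merged into one kernel-verified Lean document; each statement's English description precedes it below -/
import Mathlib

section
/- For every real q ≥ 1, every N ≥ 1 and all natural numbers d_1, …, d_N with n = d_1 + … + d_N, one has q^{D} · [d_1]_q! ⋯ [d_N]_q! / [n]_q! ≤ 1, where D = Σ_{1 ≤ i < j ≤ N} d_i d_j. -/
/-!
The recursion `[k+1]_q = q [k]_q + q^{-k}` gives `q [k]_q ≤ [k+1]_q`, hence
`q^a [k]_q ≤ [a+k]_q`. Multiplying these bounds for `k = 1, …, b` yields the binomial case
`q^{ab} [a]_q! [b]_q! ≤ [a+b]_q!`, and the general case follows by induction on `N`: appending a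
block `d_{N+1}` raises `D` by `(d_1 + ⋯ + d_N) d_{N+1}`, exactly the exponent of the binomial case.
-/

/-- The balanced `q`-integer: `[k]_q = (q^k - q^{-k})/(q - q⁻¹)` for `q ≠ 1`, and `[k]_1 = k`. -/
noncomputable def qint (q : ℝ) (n : ℕ) : ℝ :=
  if q = 1 then n else (q ^ n - q⁻¹ ^ n) / (q - q⁻¹)

/-- The balanced `q`-factorial `[k]_q! = [k]_q [k-1]_q ⋯ [1]_q`, with `[0]_q! = 1`. -/
noncomputable def qfact (q : ℝ) (n : ℕ) : ℝ :=
  ∏ i ∈ Finset.range n, qint q (i + 1)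

section

variable {q : ℝ}

@[simp]
lemma qint_zero (q : ℝ) : qint q 0 = 0 := by
  simp [qint]

lemma qint_succ (hq : 0 < q) (k : ℕ) : qint q (k + 1) = q * qint q k + q⁻¹ ^ k := by
  unfold qint
  split_ifs with h1
  · simp [h1]
  · have hsub : q - q⁻¹ ≠ 0 := by
      rw [sub_ne_zero]
      intro h
      have : q * q = 1 := by rw [← mul_inv_cancel₀ hq.ne', ← h]
      exact h1 (by nlinarith)
    rw [mul_div_assoc', div_add' _ _ _ hsub]
    congr 1
    ring

lemma qint_nonneg (hq : 0 < q) (k : ℕ) : 0 ≤ qint q k := by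
  induction k with
  | zero => simp
  | succ k ih => rw [qint_succ hq]; positivity

lemma qint_succ_pos (hq : 0 < q) (k : ℕ) : 0 < qint q (k + 1) := by
  rw [qint_succ hq]
  have := qint_nonneg hq k
  positivity

lemma mul_qint_le_qint_succ (hq : 0 < q) (k : ℕ) : q * qint q k ≤ qint q (k + 1) := by
  rw [qint_succ hq]
  exact le_add_of_nonneg_right (by positivity)

lemma pow_mul_qint_le_qint_add (hq : 0 < q) (a k : ℕ) : q ^ a * qint q k ≤ qint q (a + k) := by
  induction a with
  | zero => simp
  | succ a ih =>
    calc q ^ (a + 1) * qint q k = q * (q ^ a * qint q k) := by ring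
      _ ≤ q * qint q (a + k) := by gcongr
      _ ≤ qint q (a + k + 1) := mul_qint_le_qint_succ hq _
      _ = qint q (a + 1 + k) := by rw [Nat.add_right_comm]

lemma qfact_succ (q : ℝ) (n : ℕ) : qfact q (n + 1) = qfact q n * qint q (n + 1) :=
  Finset.prod_range_succ _ _

lemma qfact_pos (hq : 0 < q) (n : ℕ) : 0 < qfact q n :=
  Finset.prod_pos fun i _ ↦ qint_succ_pos hq i

lemma pow_mul_qfact_mul_qfact_le_qfact_add (hq : 0 < q) (a b : ℕ) :
    q ^ (a * b) * qfact q a * qfact q b ≤ qfact q (a + b) := by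
  induction b with
  | zero => simp [qfact]
  | succ b ih =>
    have hstep : q ^ a * qint q (b + 1) ≤ qint q (a + b + 1) :=
      pow_mul_qint_le_qint_add hq a (b + 1)
    calc q ^ (a * (b + 1)) * qfact q a * qfact q (b + 1)
        = (q ^ (a * b) * qfact q a * qfact q b) * (q ^ a * qint q (b + 1)) := by
          rw [qfact_succ, Nat.mul_succ, pow_add]; ring
      _ ≤ qfact q (a + b) * qint q (a + b + 1) :=
          mul_le_mul ih hstep (mul_nonneg (by positivity) (qint_nonneg hq _)) (qfact_pos hq _).le
      _ = qfact q (a + (b + 1)) := by rw [← Nat.add_assoc, qfact_succ]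

lemma pow_mul_prod_qfact_le_qfact_sum (hq : 0 < q) (d : ℕ → ℕ) (N : ℕ) :
    q ^ (∑ j ∈ Finset.Icc 1 N, ∑ i ∈ Finset.Icc 1 (j - 1), d i * d j) *
      ∏ i ∈ Finset.Icc 1 N, qfact q (d i) ≤ qfact q (∑ k ∈ Finset.Icc 1 N, d k) := by
  induction N with
  | zero => simp [qfact]
  | succ N ih =>
    have hN : 1 ≤ N + 1 := Nat.le_add_left 1 N
    rw [Finset.sum_Icc_succ_top hN, Finset.sum_Icc_succ_top hN, Finset.prod_Icc_succ_top hN,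
      Nat.add_sub_cancel, ← Finset.sum_mul]
    set m := ∑ k ∈ Finset.Icc 1 N, d k
    calc q ^ (∑ j ∈ Finset.Icc 1 N, ∑ i ∈ Finset.Icc 1 (j - 1), d i * d j + m * d (N + 1)) *
          ((∏ i ∈ Finset.Icc 1 N, qfact q (d i)) * qfact q (d (N + 1)))
        = (q ^ (∑ j ∈ Finset.Icc 1 N, ∑ i ∈ Finset.Icc 1 (j - 1), d i * d j) *
            ∏ i ∈ Finset.Icc 1 N, qfact q (d i)) *
            (q ^ (m * d (N + 1)) * qfact q (d (N + 1))) := by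
          rw [pow_add]; ring
      _ ≤ qfact q m * (q ^ (m * d (N + 1)) * qfact q (d (N + 1))) :=
          mul_le_mul_of_nonneg_right ih (mul_nonneg (by positivity) (qfact_pos hq _).le)
      _ = q ^ (m * d (N + 1)) * qfact q m * qfact q (d (N + 1)) := by ring
      _ ≤ qfact q (m + d (N + 1)) := pow_mul_qfact_mul_qfact_le_qfact_add hq _ _

end

theorem stmt_4_general (q : ℝ) (hq : 1 ≤ q) (N : ℕ)
    (d : ℕ → ℕ) (n : ℕ) (hn : n = ∑ k ∈ Finset.Icc 1 N, d k)
    (D : ℕ) (hD : D = ∑ j ∈ Finset.Icc 1 N, ∑ i ∈ Finset.Icc 1 (j - 1), d i * d j) :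
    q ^ D * (∏ i ∈ Finset.Icc 1 N, qfact q (d i)) / qfact q n ≤ 1 := by
  have hq₀ : 0 < q := one_pos.trans_le hq
  rw [div_le_one (qfact_pos hq₀ n), hn, hD]
  exact pow_mul_prod_qfact_le_qfact_sum hq₀ d N

theorem stmt_4 (q : ℝ) (hq : 1 ≤ q) (N : ℕ) (hN : 1 ≤ N)
    (d : ℕ → ℕ) (n : ℕ) (hn : n = ∑ k ∈ Finset.Icc 1 N, d k)
    (D : ℕ) (hD : D = ∑ j ∈ Finset.Icc 1 N, ∑ i ∈ Finset.Icc 1 (j - 1), d i * d j) :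
    q ^ D * (∏ i ∈ Finset.Icc 1 N, qfact q (d i)) / qfact q n ≤ 1 :=
  stmt_4_general q hq N d n hn D hD
end

section
/- Let H be a Hilbert space and p, q two orthogonal projections on H of equal finite rank. If ‖(1 − q)p‖ < 1, then ‖(1 − p)q‖ < 1 as well; consequently ‖p − q‖ = max(‖(1−q)p‖, ‖(1−p)q‖) < 1. -/
/-!
Write `x = q x + (1 - q) x`; then `(p - q) x = p (1 - q) x - (1 - p) q x` is a sum of a vector in
the range of `p` and one in its kernel, so Pythagoras gives `‖p - q‖ ≤ max ‖(1 - q) p‖ ‖(1 - p) q‖`,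
while the reverse inequalities hold in any C⋆-ring.

If `‖(1 - q) p‖ < 1`, then `q` is injective on `ran p`, hence (the ranks being equal and finite)
maps `ran p` onto `ran q`. So a vector `v ∈ ran q` orthogonal to `ran p` is `v = q u` with
`u ∈ ran p`, and `‖v‖² = ⟪v, u⟫ = 0`. Thus `‖(1 - p) v‖ < ‖v‖` for every nonzero `v ∈ ran q`, and
compactness of the unit sphere of `ran q` turns this into `‖(1 - p) q‖ < 1`.
-/

open scoped InnerProductSpace
open Module

theorem IsStarProjection.norm_one_sub_mul_le_norm_sub {A : Type*} [NormedRing A] [StarRing A]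
    [CStarRing A] {p q : A} (hq : IsStarProjection q) :
    ‖(1 - p) * q‖ ≤ ‖p - q‖ := by
  have h : (1 - p) * q = -((p - q) * q) := by
    rw [sub_mul, sub_mul, one_mul, hq.isIdempotentElem.eq, neg_sub]
  calc ‖(1 - p) * q‖ = ‖(p - q) * q‖ := by rw [h, norm_neg]
    _ ≤ ‖p - q‖ * ‖q‖ := norm_mul_le _ _
    _ ≤ ‖p - q‖ := mul_le_of_le_one_right (norm_nonneg _) (hq.norm_le q)

theorem IsSelfAdjoint.norm_mul_comm {A : Type*} [NonUnitalNormedRing A] [StarRing A]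
    [NormedStarGroup A] {a b : A} (ha : IsSelfAdjoint a) (hb : IsSelfAdjoint b) :
    ‖a * b‖ = ‖b * a‖ := by
  rw [← norm_star, star_mul, ha.star_eq, hb.star_eq]

theorem IsIdempotentElem.norm_mul_apply_le {𝕜 E : Type*} [NontriviallyNormedField 𝕜]
    [SeminormedAddCommGroup E] [NormedSpace 𝕜 E] {p : E →L[𝕜] E} (hp : IsIdempotentElem p)
    (T : E →L[𝕜] E) (x : E) : ‖(T * p) x‖ ≤ ‖T * p‖ * ‖p x‖ := by
  have hpx : p (p x) = p x := congr($hp.eq x)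
  simpa only [mul_apply_eq_comp, hpx] using (T * p).le_opNorm (p x)

theorem ContinuousLinearMap.opNorm_lt_one_of_norm_apply_lt {𝕜 E F : Type*} [RCLike 𝕜]
    [NormedAddCommGroup E] [NormedSpace 𝕜 E] [FiniteDimensional 𝕜 E]
    [SeminormedAddCommGroup F] [NormedSpace 𝕜 F] (f : E →L[𝕜] F)
    (hf : ∀ x, x ≠ 0 → ‖f x‖ < ‖x‖) : ‖f‖ < 1 := by
  rcases subsingleton_or_nontrivial E with hE | hE
  · simp [f.opNorm_subsingleton]
  have : ProperSpace E := FiniteDimensional.proper_rclike 𝕜 E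
  obtain ⟨y, hy⟩ := exists_ne (0 : E)
  have hne : (Metric.sphere (0 : E) 1).Nonempty :=
    ⟨_, mem_sphere_zero_iff_norm.mpr (norm_smul_inv_norm (𝕜 := 𝕜) hy)⟩
  obtain ⟨x, hx, hmax⟩ :=
    (isCompact_sphere (0 : E) 1).exists_sSup_image_eq hne f.continuous.norm.continuousOn
  rw [f.sSup_sphere_eq_norm] at hmax
  rw [mem_sphere_zero_iff_norm] at hx
  rw [hmax, ← hx]
  exact hf x (norm_ne_zero_iff.mp (hx ▸ one_ne_zero))

section InnerProductSpace

variable {𝕜 E : Type*} [RCLike 𝕜] [NormedAddCommGroup E] [InnerProductSpace 𝕜 E]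

namespace Submodule

variable {U V : Submodule 𝕜 E}

theorem disjoint_orthogonal_of_norm_starProjection_mul_lt_one [U.HasOrthogonalProjection]
    [V.HasOrthogonalProjection] (h : ‖Vᗮ.starProjection * U.starProjection‖ < 1) :
    Disjoint U Vᗮ := by
  refine disjoint_def.mpr fun x hxU hxV => norm_le_zero_iff.mp ?_
  have hx : (Vᗮ.starProjection * U.starProjection) x = x := by
    rw [mul_apply_eq_comp, starProjection_eq_self_iff.mpr hxU, starProjection_eq_self_iff.mpr hxV]
  have hle := (Vᗮ.starProjection * U.starProjection).le_opNorm x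
  rw [hx] at hle
  nlinarith [norm_nonneg x]

theorem disjoint_orthogonal_symm_of_finrank_eq [FiniteDimensional 𝕜 U] [FiniteDimensional 𝕜 V]
    (hUV : finrank 𝕜 U = finrank 𝕜 V) (h : Disjoint U Vᗮ) : Disjoint V Uᗮ := by
  let f : U →ₗ[𝕜] V := (V.orthogonalProjectionOnto : E →ₗ[𝕜] V) ∘ₗ U.subtype
  have hf : Function.Injective f := by
    refine (injective_iff_map_eq_zero f).mpr fun u hu => Subtype.ext ?_
    exact disjoint_def.mp h u u.2 (orthogonalProjectionOnto_eq_zero_iff.mp hu)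
  refine disjoint_def.mpr fun v hvV hvU => ?_
  obtain ⟨u, hu⟩ := (LinearMap.injective_iff_surjective_of_finrank_eq_finrank hUV).mp hf ⟨v, hvV⟩
  have hv : V.starProjection u = v := congrArg Subtype.val hu
  rw [← inner_self_eq_zero (𝕜 := 𝕜)]
  calc ⟪v, v⟫_𝕜 = ⟪v, V.starProjection u⟫_𝕜 := by rw [hv]
    _ = ⟪V.starProjection v, u⟫_𝕜 := (inner_starProjection_left_eq_right V v u).symm
    _ = ⟪v, u⟫_𝕜 := by rw [starProjection_eq_self_iff.mpr hvV]
    _ = 0 := inner_left_of_mem_orthogonal u.2 hvU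

theorem norm_orthogonal_starProjection_mul_lt_one [U.HasOrthogonalProjection]
    [FiniteDimensional 𝕜 V] (h : Disjoint V Uᗮ) :
    ‖Uᗮ.starProjection * V.starProjection‖ < 1 := by
  have hlt : ‖Uᗮ.starProjection ∘L V.subtypeL‖ < 1 := by
    refine ContinuousLinearMap.opNorm_lt_one_of_norm_apply_lt _ fun v hv => ?_
    have hUv : U.starProjection v ≠ 0 := fun h0 =>
      hv (Subtype.ext (disjoint_def.mp h v v.2 ((starProjection_apply_eq_zero_iff U).mp h0)))
    have hpyth := norm_sq_eq_add_norm_sq_starProjection (v : E) U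
    rw [norm_coe] at hpyth
    have hpos := norm_pos_iff.mpr hUv
    refine (pow_lt_pow_iff_left₀ (norm_nonneg _) (norm_nonneg _) two_ne_zero).mp ?_
    simp only [ContinuousLinearMap.comp_apply, subtypeL_apply]
    nlinarith
  calc ‖Uᗮ.starProjection * V.starProjection‖
      = ‖(Uᗮ.starProjection ∘L V.subtypeL) ∘L V.orthogonalProjectionOnto‖ := rfl
    _ ≤ ‖Uᗮ.starProjection ∘L V.subtypeL‖ * ‖V.orthogonalProjectionOnto‖ :=
      ContinuousLinearMap.opNorm_comp_le _ _
    _ ≤ ‖Uᗮ.starProjection ∘L V.subtypeL‖ :=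
      mul_le_of_le_one_right (norm_nonneg _) V.orthogonalProjectionOnto_norm_le
    _ < 1 := hlt

end Submodule

namespace IsStarProjection

variable [CompleteSpace E] {p q : E →L[𝕜] E}

theorem inner_apply_one_sub_apply (hp : IsStarProjection p) (x y : E) :
    ⟪p x, (1 - p) y⟫_𝕜 = 0 := by
  calc ⟪p x, (1 - p) y⟫_𝕜 = ⟪x, (p * (1 - p)) y⟫_𝕜 := hp.isSelfAdjoint.isSymmetric _ _
    _ = 0 := by rw [hp.mul_one_sub_self, zero_apply, inner_zero_right]

theorem norm_add_sq (hp : IsStarProjection p) (x y : E) :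
    ‖p x + (1 - p) y‖ ^ 2 = ‖p x‖ ^ 2 + ‖(1 - p) y‖ ^ 2 := by
  rw [@_root_.norm_add_sq 𝕜, hp.inner_apply_one_sub_apply]
  simp

theorem norm_sub_sq (hp : IsStarProjection p) (x y : E) :
    ‖p x - (1 - p) y‖ ^ 2 = ‖p x‖ ^ 2 + ‖(1 - p) y‖ ^ 2 := by
  rw [@_root_.norm_sub_sq 𝕜, hp.inner_apply_one_sub_apply]
  simp

theorem norm_sq_eq_add (hp : IsStarProjection p) (x : E) :
    ‖x‖ ^ 2 = ‖p x‖ ^ 2 + ‖(1 - p) x‖ ^ 2 := by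
  simpa only [sub_apply, one_apply_eq_self, add_sub_cancel] using hp.norm_add_sq x x

theorem norm_sub_le_max (hp : IsStarProjection p) (hq : IsStarProjection q) :
    ‖p - q‖ ≤ max ‖(1 - q) * p‖ ‖(1 - p) * q‖ := by
  set a := ‖(1 - q) * p‖
  set b := ‖(1 - p) * q‖
  have ha : ‖p * (1 - q)‖ = a := hp.isSelfAdjoint.norm_mul_comm hq.one_sub.isSelfAdjoint
  refine ContinuousLinearMap.opNorm_le_bound _ (le_max_of_le_left (norm_nonneg _)) fun x => ?_
  have hsplit : (p - q) x = p ((1 - q) x) - (1 - p) (q x) := by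
    simp only [sub_apply, one_apply_eq_self, map_sub]
    abel
  have h₁ : ‖p ((1 - q) x)‖ ≤ max a b * ‖(1 - q) x‖ :=
    (ha ▸ hq.one_sub.isIdempotentElem.norm_mul_apply_le p x).trans
      (by gcongr; exact le_max_left a b)
  have h₂ : ‖(1 - p) (q x)‖ ≤ max a b * ‖q x‖ :=
    (hq.isIdempotentElem.norm_mul_apply_le (1 - p) x).trans (by gcongr; exact le_max_right a b)
  have hsq : ‖(p - q) x‖ ^ 2 ≤ (max a b * ‖x‖) ^ 2 := by
    rw [hsplit, hp.norm_sub_sq, mul_pow, hq.norm_sq_eq_add x]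
    calc ‖p ((1 - q) x)‖ ^ 2 + ‖(1 - p) (q x)‖ ^ 2
        ≤ (max a b * ‖(1 - q) x‖) ^ 2 + (max a b * ‖q x‖) ^ 2 := by gcongr
      _ = max a b ^ 2 * (‖q x‖ ^ 2 + ‖(1 - q) x‖ ^ 2) := by ring
  exact (pow_le_pow_iff_left₀ (norm_nonneg _) (by positivity) two_ne_zero).mp hsq

theorem norm_sub_eq_max (hp : IsStarProjection p) (hq : IsStarProjection q) :
    ‖p - q‖ = max ‖(1 - q) * p‖ ‖(1 - p) * q‖ := by
  refine (hp.norm_sub_le_max hq).antisymm (max_le ?_ hq.norm_one_sub_mul_le_norm_sub)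
  rw [norm_sub_rev]
  exact hp.norm_one_sub_mul_le_norm_sub

theorem norm_one_sub_mul_lt_one_of_finrank_eq (hp : IsStarProjection p)
    (hq : IsStarProjection q) [FiniteDimensional 𝕜 (LinearMap.range (p : E →ₗ[𝕜] E))]
    [FiniteDimensional 𝕜 (LinearMap.range (q : E →ₗ[𝕜] E))]
    (hrank : finrank 𝕜 (LinearMap.range (p : E →ₗ[𝕜] E)) =
      finrank 𝕜 (LinearMap.range (q : E →ₗ[𝕜] E)))
    (h : ‖(1 - q) * p‖ < 1) : ‖(1 - p) * q‖ < 1 := by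
  obtain ⟨_, hp'⟩ := isStarProjection_iff_eq_starProjection_range.mp hp
  obtain ⟨_, hq'⟩ := isStarProjection_iff_eq_starProjection_range.mp hq
  rw [hp', hq', ← Submodule.starProjection_orthogonal'] at h ⊢
  exact Submodule.norm_orthogonal_starProjection_mul_lt_one <|
    Submodule.disjoint_orthogonal_symm_of_finrank_eq hrank <|
      Submodule.disjoint_orthogonal_of_norm_starProjection_mul_lt_one h

end IsStarProjection

end InnerProductSpace

/-- For two orthogonal projections `P`, `Q` of equal finite rank on a Hilbert space with
`‖(1-Q)P‖ < 1`, one also has `‖(1-P)Q‖ < 1`, and `‖P - Q‖ = max(‖(1-Q)P‖, ‖(1-P)Q‖) < 1`. -/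
theorem stmt_11 {H : Type*} [NormedAddCommGroup H] [InnerProductSpace ℂ H] [CompleteSpace H]
    (P Q : H →L[ℂ] H)
    (hPidem : IsIdempotentElem P) (hQidem : IsIdempotentElem Q)
    (hPsa : IsSelfAdjoint P) (hQsa : IsSelfAdjoint Q)
    (hPfin : FiniteDimensional ℂ (LinearMap.range (P : H →ₗ[ℂ] H)))
    (hQfin : FiniteDimensional ℂ (LinearMap.range (Q : H →ₗ[ℂ] H)))
    (hrank : Module.finrank ℂ (LinearMap.range (P : H →ₗ[ℂ] H)) = Module.finrank ℂ (LinearMap.range (Q : H →ₗ[ℂ] H)))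
    (h : ‖(1 - Q) * P‖ < 1) :
    ‖(1 - P) * Q‖ < 1 ∧
      ‖P - Q‖ = max ‖(1 - Q) * P‖ ‖(1 - P) * Q‖ ∧ ‖P - Q‖ < 1 := by
  have hP : IsStarProjection P := ⟨hPidem, hPsa⟩
  have hQ : IsStarProjection Q := ⟨hQidem, hQsa⟩
  have hb : ‖(1 - P) * Q‖ < 1 := hP.norm_one_sub_mul_lt_one_of_finrank_eq hQ hrank h
  have hPQ := hP.norm_sub_eq_max hQ
  exact ⟨hb, hPQ, hPQ ▸ max_lt h hb⟩
end
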